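/- arXiv:1009.5647 — 5 statements merged into one kernel-verified Lean document; each statement's English description precedes it below -/
import Mathlib

section
/- Gauge-invariant Zerilli equation on the Schwarzschild exterior: if smooth functions h̃_tt, h̃_tr, h̃_rr, K̃ : D → ℝ satisfy the even-parity linearized vacuum Einstein equations (gauge-invariant Martel–Poisson form), then the function u := Λ^{-1} Ψ̃ satisfies, at every point of D, the Zerilli wave equation ∂_t² u − ∂_{r*}² u + (12 M f / (Λ² r⁴)) · ( 6M²/r + 3μM + μ²r/2 + (μ² r² /(6M))·(μ/2 + 1) ) · u = 0. -/
noncomputable section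

/-- Partial derivative in the first (time) variable. -/
def ptd (u : ℝ → ℝ → ℝ) : ℝ → ℝ → ℝ := fun t r => deriv (fun s => u s r) t

/-- Partial derivative in the second (radial) variable. -/
def prd (u : ℝ → ℝ → ℝ) : ℝ → ℝ → ℝ := fun t r => deriv (fun s => u t s) r

/-- The Schwarzschild lapse `f(r) = 1 - 2M/r`. -/
def fS (M r : ℝ) : ℝ := 1 - 2 * M / r

/-- `λ = l (l+1)`. -/
def lam (l : ℕ) : ℝ := (l : ℝ) * ((l : ℝ) + 1)

/-- `μ = (l-1) (l+2)`. -/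
def muS (l : ℕ) : ℝ := ((l : ℝ) - 1) * ((l : ℝ) + 2)

/-- `Λ(r) = μ + 6M/r`. -/
def LamS (M : ℝ) (l : ℕ) (r : ℝ) : ℝ := muS l + 6 * M / r

/-- The tortoise derivative `∂_{r*} u = f ∂_r u`. -/
def rstar (M : ℝ) (u : ℝ → ℝ → ℝ) : ℝ → ℝ → ℝ := fun t r => fS M r * prd u t r

/-- Smoothness on the Schwarzschild exterior domain `D = {(t,r) | r > 2M}`. -/
def smoothOn (M : ℝ) (u : ℝ → ℝ → ℝ) : Prop :=
  ContDiffOn ℝ (⊤ : ℕ∞) (fun p : ℝ × ℝ => u p.1 p.2) {p : ℝ × ℝ | 2 * M < p.2}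

/-- The even-parity linearized vacuum Einstein equations in the gauge-invariant
Martel–Poisson form, on the Schwarzschild exterior. -/
def MPEven (M : ℝ) (l : ℕ) (htt htr hrr K : ℝ → ℝ → ℝ) : Prop :=
  ∀ t r : ℝ, 2 * M < r →
    (-(prd (prd K) t r) - ((3*r - 5*M) / (r^2 * fS M r)) * prd K t r
        + (fS M r / r) * prd hrr t r + (((lam l + 2) * r + 4*M) / (2*r^3)) * hrr t r
        + (muS l / (2*r^2 * fS M r)) * K t r = 0) ∧
    (ptd (prd K) t r + ((r - 3*M) / (r^2 * fS M r)) * ptd K t r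
        - (fS M r / r) * ptd hrr t r - (lam l / (2*r^2)) * htr t r = 0) ∧
    (-(ptd (ptd K) t r) + ((r - M) * fS M r / r^2) * prd K t r
        + (2 * fS M r / r) * ptd htr t r - (fS M r / r) * prd htt t r
        + ((lam l * r + 4*M) / (2*r^3)) * htt t r - ((fS M r)^2 / r^2) * hrr t r
        - (muS l * fS M r / (2*r^2)) * K t r = 0) ∧
    (ptd hrr t r - prd htr t r + (1 / fS M r) * ptd K t r
        - (2*M / (r^2 * fS M r)) * htr t r = 0) ∧
    (-(ptd htr t r) + prd htt t r - fS M r * prd K t r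
        - ((r - M) / (r^2 * fS M r)) * htt t r + ((r - M) * fS M r / r^2) * hrr t r = 0) ∧
    (-(ptd (ptd hrr) t r) + 2 * ptd (prd htr) t r - prd (prd htt) t r
        - (1 / fS M r) * ptd (ptd K) t r + fS M r * prd (prd K) t r
        + (2*(r - M) / (r^2 * fS M r)) * ptd htr t r
        - ((r - 3*M) / (r^2 * fS M r)) * prd htt t r
        - ((r - M) * fS M r / r^2) * prd hrr t r + (2*(r - M) / r^2) * prd K t r
        + ((lam l * r^2 - 2*(2 + lam l)*M*r + 4*M^2) / (2*r^4 * (fS M r)^2)) * htt t r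
        - ((lam l * r^2 - 2*muS l*M*r - 4*M^2) / (2*r^4)) * hrr t r = 0) ∧
    ((1 / fS M r) * htt t r - fS M r * hrr t r = 0)

/-- The Zerilli master function
`Ψ̃ = (Λ r / 4) (K̃ + (2f/Λ)(f h̃_rr - r ∂_r K̃))`. -/
def PsiZ (M : ℝ) (l : ℕ) (hrr K : ℝ → ℝ → ℝ) : ℝ → ℝ → ℝ :=
  fun t r => (LamS M l r * r / 4) *
    (K t r + (2 * fS M r / LamS M l r) * (fS M r * hrr t r - r * prd K t r))


section ZerilliAux

open Filter

lemma isOpenD {M : ℝ} : IsOpen {p : ℝ × ℝ | 2 * M < p.2} :=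
  isOpen_Ioi.preimage continuous_snd

lemma smooth_fdiff {M : ℝ} {u : ℝ → ℝ → ℝ} (hu : smoothOn M u) {t r : ℝ} (hr : 2 * M < r) :
    DifferentiableAt ℝ (fun p : ℝ × ℝ => u p.1 p.2) (t, r) :=
  (hu.differentiableOn (by simp)).differentiableAt (isOpenD.mem_nhds (show 2*M < (t,r).2 from hr))

lemma smooth_hasDerivAt_t {M : ℝ} {u : ℝ → ℝ → ℝ} (hu : smoothOn M u) {t r : ℝ}
    (hr : 2 * M < r) :
    HasDerivAt (fun s => u s r) (fderiv ℝ (fun p : ℝ × ℝ => u p.1 p.2) (t, r) (1, 0)) t := by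
  have h1 : HasDerivAt (fun s : ℝ => (s, r)) ((1 : ℝ), (0 : ℝ)) t := by
    simpa using (hasDerivAt_id t).prodMk (hasDerivAt_const t r)
  exact ((smooth_fdiff hu hr).hasFDerivAt.comp_hasDerivAt t h1)

lemma smooth_hasDerivAt_r {M : ℝ} {u : ℝ → ℝ → ℝ} (hu : smoothOn M u) {t r : ℝ}
    (hr : 2 * M < r) :
    HasDerivAt (fun s => u t s) (fderiv ℝ (fun p : ℝ × ℝ => u p.1 p.2) (t, r) (0, 1)) r := by
  have h1 : HasDerivAt (fun s : ℝ => (t, s)) ((0 : ℝ), (1 : ℝ)) r := by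
    simpa using (hasDerivAt_const r t).prodMk (hasDerivAt_id r)
  exact ((smooth_fdiff hu hr).hasFDerivAt.comp_hasDerivAt r h1)

lemma smooth_diff_t {M : ℝ} {u : ℝ → ℝ → ℝ} (hu : smoothOn M u) {t r : ℝ} (hr : 2 * M < r) :
    DifferentiableAt ℝ (fun s => u s r) t := (smooth_hasDerivAt_t hu hr).differentiableAt

lemma smooth_diff_r {M : ℝ} {u : ℝ → ℝ → ℝ} (hu : smoothOn M u) {t r : ℝ} (hr : 2 * M < r) :
    DifferentiableAt ℝ (fun s => u t s) r := (smooth_hasDerivAt_r hu hr).differentiableAt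

lemma smooth_ptd {M : ℝ} {u : ℝ → ℝ → ℝ} (hu : smoothOn M u) : smoothOn M (ptd u) := by
  have h : ContDiffOn ℝ (⊤ : ℕ∞) (fun p : ℝ × ℝ => fderiv ℝ (fun q : ℝ × ℝ => u q.1 q.2) p (1, 0))
      {p : ℝ × ℝ | 2 * M < p.2} :=
    (hu.fderiv_of_isOpen isOpenD (by simp)).clm_apply contDiffOn_const
  exact h.congr (fun p hp => by
    have := (smooth_hasDerivAt_t hu (t := p.1) (r := p.2) hp).deriv
    simpa [ptd] using this)

lemma smooth_prd {M : ℝ} {u : ℝ → ℝ → ℝ} (hu : smoothOn M u) : smoothOn M (prd u) := by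
  have h : ContDiffOn ℝ (⊤ : ℕ∞) (fun p : ℝ × ℝ => fderiv ℝ (fun q : ℝ × ℝ => u q.1 q.2) p (0, 1))
      {p : ℝ × ℝ | 2 * M < p.2} :=
    (hu.fderiv_of_isOpen isOpenD (by simp)).clm_apply contDiffOn_const
  exact h.congr (fun p hp => by
    have := (smooth_hasDerivAt_r hu (t := p.1) (r := p.2) hp).deriv
    simpa [prd] using this)

end ZerilliAux

open Filter Topology in
set_option maxHeartbeats 4000000 in
/-- the gauge-invariant Zerilli equation on the Schwarzschild exterior. -/
theorem zerilli_equation (M : ℝ) (hM : 0 < M) (l : ℕ) (hl : 2 ≤ l)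
    (htt htr hrr K : ℝ → ℝ → ℝ)
    (hs_tt : smoothOn M htt) (hs_tr : smoothOn M htr)
    (hs_rr : smoothOn M hrr) (hs_K : smoothOn M K)
    (heqs : MPEven M l htt htr hrr K) :
    ∀ t r : ℝ, 2 * M < r →
      ptd (ptd (fun t r => (LamS M l r)⁻¹ * PsiZ M l hrr K t r)) t r
        - rstar M (rstar M (fun t r => (LamS M l r)⁻¹ * PsiZ M l hrr K t r)) t r
        + (12 * M * fS M r / ((LamS M l r)^2 * r^4)) *
            (6*M^2/r + 3*muS l*M + (muS l)^2*r/2 + ((muS l)^2*r^2/(6*M)) * (muS l/2 + 1)) *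
            ((LamS M l r)⁻¹ * PsiZ M l hrr K t r) = 0 := by
  intro t r hr
  set Phi : ℝ → ℝ → ℝ := fun t r => (LamS M l r)⁻¹ * PsiZ M l hrr K t r with hPhidef
  set m := muS l with hmdef
  -- basic positivity facts
  have hl2 : (2:ℝ) ≤ (l:ℝ) := by exact_mod_cast hl
  have hm4 : 4 ≤ m := by rw [hmdef]; unfold muS; nlinarith
  have hlam : lam l = m + 2 := by rw [hmdef]; unfold lam muS; ring
  have hpos : ∀ s : ℝ, 2*M < s → 0 < s := fun s hs => lt_trans (by linarith) hs
  have hsub : ∀ s : ℝ, 2*M < s → 0 < s - 2*M := fun s hs => by linarith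
  have hNpos : ∀ s : ℝ, 2*M < s → 0 < m*s + 6*M := fun s hs => by nlinarith [hpos s hs]
  have hr0 : (0:ℝ) < r := hpos r hr
  have hrne : r ≠ 0 := ne_of_gt hr0
  have hrsub : r - 2*M ≠ 0 := ne_of_gt (hsub r hr)
  have hrN : m*r + 6*M ≠ 0 := ne_of_gt (hNpos r hr)
  have hM0 : M ≠ 0 := ne_of_gt hM
  have hm40 : (0:ℝ) < muS l := by unfold muS; nlinarith
  have hm0 : (0:ℝ) < m := by rw [hmdef]; exact hm40
  have hDen : ∀ s : ℝ, 2*M < s → 4*m^2*s^4 + 48*M*m*s^3 + 144*M^2*s^2 ≠ 0 := by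
    intro s hs
    have h0 := hpos s hs
    have hgt : 0 < 4*m^2*s^4 + 48*M*m*s^3 + 144*M^2*s^2 := by
      nlinarith [mul_pos (mul_pos hm0 hm0) (pow_pos h0 4),
        mul_pos (mul_pos hM hm0) (pow_pos h0 3), mul_pos (mul_pos hM hM) (pow_pos h0 2)]
    exact ne_of_gt hgt
  have hfs_eq : ∀ s : ℝ, 2*M < s → fS M s = (s - 2*M)/s := by
    intro s hs; unfold fS; field_simp [ne_of_gt (hpos s hs)]
  have hLam_eq : LamS M l r = (m*r + 6*M)/r := by
    unfold LamS; rw [← hmdef]; field_simp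
  -- smoothness of partial derivatives
  have sKr : smoothOn M (prd K) := smooth_prd hs_K
  have sKt : smoothOn M (ptd K) := smooth_ptd hs_K
  -- pointwise explicit form of Phi
  have hPhiT : ∀ t' s : ℝ, 2*M < s → Phi t' s =
      s/4 * K t' s + (s^2 - 4*M*s + 4*M^2)/(2*m*s + 12*M) * hrr t' s
        - (s^3 - 2*M*s^2)/(2*m*s + 12*M) * prd K t' s := by
    intro t' s hs
    have hs0 : s ≠ 0 := ne_of_gt (hpos s hs)
    have hsN : m*s + 6*M ≠ 0 := ne_of_gt (hNpos s hs)
    rw [hPhidef]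
    simp only [PsiZ, LamS, fS, ← hmdef]
    have hsN' : m + 6*M/s ≠ 0 := by
      rw [show m + 6*M/s = (m*s+6*M)/s by field_simp]
      exact div_ne_zero hsN hs0
    have hsN2 : 2*m*s + 12*M ≠ 0 := fun h => hsN (by linarith)
    have hsN3 : m*s*2 + M*12 ≠ 0 := fun h => hsN (by linarith)
    field_simp
    ring
  -- solved form of equation (ii)
  have hKrt : ∀ t' s : ℝ, 2*M < s → ptd (prd K) t' s =
      -((s - 3*M)/(s*(s - 2*M))) * ptd K t' s + ((s - 2*M)/s^2) * ptd hrr t' s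
        + ((m + 2)/(2*s^2)) * htr t' s := by
    intro t' s hs
    have hs0 : s ≠ 0 := ne_of_gt (hpos s hs)
    have hs2 : s - 2*M ≠ 0 := ne_of_gt (hsub s hs)
    have hs2' : s - M*2 ≠ 0 := by rwa [mul_comm]
    have e := (heqs t' s hs).2.1
    rw [hlam, hfs_eq s hs] at e
    linear_combination (norm := (field_simp; ring)) e
  -- solved form of equation (i)
  have hKrr : ∀ t' s : ℝ, 2*M < s → prd (prd K) t' s =
      -((3*s - 5*M)/(s*(s - 2*M))) * prd K t' s + ((s - 2*M)/s^2) * prd hrr t' s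
        + (((m + 4)*s + 4*M)/(2*s^3)) * hrr t' s + (m/(2*s*(s - 2*M))) * K t' s := by
    intro t' s hs
    have hs0 : s ≠ 0 := ne_of_gt (hpos s hs)
    have hs2 : s - 2*M ≠ 0 := ne_of_gt (hsub s hs)
    have hs2' : s - M*2 ≠ 0 := by rwa [mul_comm]
    have e := (heqs t' s hs).1
    rw [hlam, hfs_eq s hs, ← hmdef] at e
    linear_combination (norm := (field_simp; ring)) (-1 : ℝ) * e
  -- solved form of equation (iii) at (t, r)
  have hKtt : ptd (ptd K) t r =
      ((r - M)*(r - 2*M)/r^3) * prd K t r + (2*(r - 2*M)/r^2) * ptd htr t r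
        - ((r - 2*M)/r^2) * prd htt t r + (((m + 2)*r + 4*M)/(2*r^3)) * htt t r
        - ((r - 2*M)^2/r^4) * hrr t r - (m*(r - 2*M)/(2*r^3)) * K t r := by
    have e := (heqs t r hr).2.2.1
    rw [hlam, hfs_eq r hr, ← hmdef] at e
    linear_combination (norm := (field_simp; ring)) (-1 : ℝ) * e
  -- solved form of equation (v) at (t, r)
  have hHt : ptd htr t r =
      prd htt t r - ((r - 2*M)/r) * prd K t r - ((r - M)/(r*(r - 2*M))) * htt t r
        + ((r - M)*(r - 2*M)/r^3) * hrr t r := by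
    have e := (heqs t r hr).2.2.2.2.1
    rw [hfs_eq r hr] at e
    linear_combination (norm := (field_simp; ring)) (-1 : ℝ) * e
  -- solved form of equation (vii)
  have hhtt : ∀ s : ℝ, 2*M < s → htt t s =
      (s^2 - 4*M*s + 4*M^2)/s^2 * hrr t s := by
    intro s hs
    have hs0 : s ≠ 0 := ne_of_gt (hpos s hs)
    have hs2 : s - 2*M ≠ 0 := ne_of_gt (hsub s hs)
    have hs2' : s - M*2 ≠ 0 := by rwa [mul_comm]
    have e := (heqs t s hs).2.2.2.2.2.2
    rw [hfs_eq s hs] at e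
    linear_combination (norm := (field_simp; ring)) ((s-2*M)/s) * e
  -- radial derivative of equation (vii)
  have hhttr : prd htt t r = deriv (fun x : ℝ =>
      (x^2 - 4*M*x + 4*M^2)/x^2 * hrr t x) r := by
    have hW : (fun x => htt t x) =ᶠ[𝓝 r]
        (fun x => (x^2 - 4*M*x + 4*M^2)/x^2 * hrr t x) := by
      filter_upwards [Ioi_mem_nhds hr] with x hx using hhtt x hx
    exact hW.deriv_eq
  have hnum2 := ((hasDerivAt_pow 2 r).sub ((hasDerivAt_id' r).const_mul (4*M))).add
      (hasDerivAt_const r (4*M^2))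
  have hh_r : HasDerivAt (fun x => hrr t x) (prd hrr t r) r :=
    (smooth_diff_r hs_rr hr).hasDerivAt
  have hDnum := (hnum2.div (hasDerivAt_pow 2 r) (pow_ne_zero 2 hrne)).mul hh_r
  have hhttrv := hhttr.trans hDnum.deriv
  -- time-slice derivatives
  have dK_t : ∀ s : ℝ, HasDerivAt (fun x => K x r) (ptd K s r) s :=
    fun s => (smooth_diff_t hs_K hr).hasDerivAt
  have dh_t : ∀ s : ℝ, HasDerivAt (fun x => hrr x r) (ptd hrr s r) s :=
    fun s => (smooth_diff_t hs_rr hr).hasDerivAt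
  have dKr_t : ∀ s : ℝ, HasDerivAt (fun x => prd K x r) (ptd (prd K) s r) s :=
    fun s => (smooth_diff_t sKr hr).hasDerivAt
  have dKt_t : ∀ s : ℝ, HasDerivAt (fun x => ptd K x r) (ptd (ptd K) s r) s :=
    fun s => (smooth_diff_t sKt hr).hasDerivAt
  have dH_t : ∀ s : ℝ, HasDerivAt (fun x => htr x r) (ptd htr s r) s :=
    fun s => (smooth_diff_t hs_tr hr).hasDerivAt
  -- radial-slice derivatives
  have dK_r : ∀ s : ℝ, 2*M < s → HasDerivAt (fun x => K t x) (prd K t s) s :=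
    fun s hs => (smooth_diff_r hs_K hs).hasDerivAt
  have dh_r : ∀ s : ℝ, 2*M < s → HasDerivAt (fun x => hrr t x) (prd hrr t s) s :=
    fun s hs => (smooth_diff_r hs_rr hs).hasDerivAt
  have dKr_r : ∀ s : ℝ, 2*M < s → HasDerivAt (fun x => prd K t x) (prd (prd K) t s) s :=
    fun s hs => (smooth_diff_r sKr hs).hasDerivAt
  -- first time derivative of Phi
  have hT1 : ∀ s : ℝ, ptd Phi s r =
      (m+2)*r^2/(4*(m*r+6*M)) * ptd K s r - (m+2)*(r-2*M)/(4*(m*r+6*M)) * htr s r := by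
    intro s
    have hfun : (fun x => Phi x r) = (fun x =>
        r/4 * K x r + (r^2 - 4*M*r + 4*M^2)/(2*m*r + 12*M) * hrr x r
          - (r^3 - 2*M*r^2)/(2*m*r + 12*M) * prd K x r) := funext fun x => hPhiT x r hr
    have hd := (((dK_t s).const_mul (r/4)).fun_add
        ((dh_t s).const_mul ((r^2 - 4*M*r + 4*M^2)/(2*m*r + 12*M)))).fun_sub
        ((dKr_t s).const_mul ((r^3 - 2*M*r^2)/(2*m*r + 12*M)))
    have h0 : ptd Phi s r = deriv (fun x => Phi x r) s := rfl
    rw [h0, hfun, hd.deriv, hKrt s r hr]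
    have hrsub' : r - M*2 ≠ 0 := by rwa [mul_comm]
    field_simp
    ring
  -- second time derivative of Phi
  have hT2 : ptd (ptd Phi) t r =
      (m+2)*r^2/(4*(m*r+6*M)) * ptd (ptd K) t r
        - (m+2)*(r-2*M)/(4*(m*r+6*M)) * ptd htr t r := by
    have hfun : (fun s => ptd Phi s r) = (fun s =>
        (m+2)*r^2/(4*(m*r+6*M)) * ptd K s r - (m+2)*(r-2*M)/(4*(m*r+6*M)) * htr s r) :=
      funext hT1
    have hd := ((dKt_t t).const_mul ((m+2)*r^2/(4*(m*r+6*M)))).fun_sub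
        ((dH_t t).const_mul ((m+2)*(r-2*M)/(4*(m*r+6*M))))
    have h0 : ptd (ptd Phi) t r = deriv (fun s => ptd Phi s r) t := rfl
    rw [h0, hfun, hd.deriv]
  -- first radial derivative of Phi
  have hR1 : ∀ s : ℝ, 2*M < s → prd Phi t s =
      ((6*M*m*s^3 + 36*M^2*s^2) * K t s
        + ((m^2 + 2*m)*s^5 + 6*M*m*s^4 + 24*M^2*s^3) * prd K t s
        + ((-m^2 - 2*m)*s^4 + (2*M*m^2 - 2*M*m)*s^3 + (12*M^2*m - 24*M^2)*s^2 + 48*M^3*s)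
            * hrr t s)
        / (4*m^2*s^4 + 48*M*m*s^3 + 144*M^2*s^2) := by
    intro s hs
    have hs0 : s ≠ 0 := ne_of_gt (hpos s hs)
    have hs2 : s - 2*M ≠ 0 := ne_of_gt (hsub s hs)
    have hsN : m*s + 6*M ≠ 0 := ne_of_gt (hNpos s hs)
    have hsN2 : 2*m*s + 12*M ≠ 0 := fun h => hsN (by linarith)
    have hfun : (fun x => Phi t x) =ᶠ[𝓝 s] (fun x =>
        x/4 * K t x + (x^2 - 4*M*x + 4*M^2)/(2*m*x + 12*M) * hrr t x
          - (x^3 - 2*M*x^2)/(2*m*x + 12*M) * prd K t x) := by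
      filter_upwards [Ioi_mem_nhds hs] with x hx using hPhiT t x hx
    have num2 := ((hasDerivAt_pow 2 s).fun_sub ((hasDerivAt_id' s).const_mul (4*M))).fun_add
        (hasDerivAt_const s (4*M^2))
    have den1 := ((hasDerivAt_id' s).const_mul (2*m)).fun_add (hasDerivAt_const s (12*M))
    have num3 := (hasDerivAt_pow 3 s).fun_sub ((hasDerivAt_pow 2 s).const_mul (2*M))
    have hd := ((((hasDerivAt_id' s).div_const 4).fun_mul (dK_r s hs)).fun_add
        ((num2.fun_div den1 hsN2).fun_mul (dh_r s hs))).fun_sub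
        ((num3.fun_div den1 hsN2).fun_mul (dKr_r s hs))
    have h0 : prd Phi t s = deriv (fun x => Phi t x) s := rfl
    have hsD := hDen s hs
    have hsN3 : s*2*m + M*12 ≠ 0 := fun h => hsN (by linarith)
    have hs2' : s - M*2 ≠ 0 := by rwa [mul_comm]
    rw [h0, hfun.deriv_eq, hd.deriv, hKrr t s hs]
    rw [show 4*m^2*s^4 + 48*M*m*s^3 + 144*M^2*s^2 = s^2*(2*m*s + 12*M)^2 by ring]
    field_simp
    ring
  -- the tortoise derivative as an explicit function near r
  have hW : (fun x => rstar M Phi t x) =ᶠ[𝓝 r] (fun x => fS M x *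
      (((6*M*m*x^3 + 36*M^2*x^2) * K t x
        + ((m^2 + 2*m)*x^5 + 6*M*m*x^4 + 24*M^2*x^3) * prd K t x
        + ((-m^2 - 2*m)*x^4 + (2*M*m^2 - 2*M*m)*x^3 + (12*M^2*m - 24*M^2)*x^2 + 48*M^3*x)
            * hrr t x)
        / (4*m^2*x^4 + 48*M*m*x^3 + 144*M^2*x^2))) := by
    filter_upwards [Ioi_mem_nhds hr] with x hx
    have h0 : rstar M Phi t x = fS M x * prd Phi t x := rfl
    rw [h0, hR1 x hx]
  have hfS : HasDerivAt (fun x : ℝ => fS M x) (2*M/r^2) r := by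
    have h1 := ((hasDerivAt_inv hrne).const_mul (2*M)).const_sub 1
    have h2 : (fun x : ℝ => fS M x) = (fun x : ℝ => 1 - 2*M*x⁻¹) := by
      funext x; rw [fS, div_eq_mul_inv]
    rw [h2]
    refine h1.congr_deriv ?_
    field_simp
  have hDen0 := hDen r hr
  have pA1 := ((hasDerivAt_pow 3 r).const_mul (6*M*m)).fun_add
      ((hasDerivAt_pow 2 r).const_mul (36*M^2))
  have pA2 := (((hasDerivAt_pow 5 r).const_mul (m^2 + 2*m)).fun_add
      ((hasDerivAt_pow 4 r).const_mul (6*M*m))).fun_add ((hasDerivAt_pow 3 r).const_mul (24*M^2))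
  have pA3 := ((((hasDerivAt_pow 4 r).const_mul (-m^2 - 2*m)).fun_add
      ((hasDerivAt_pow 3 r).const_mul (2*M*m^2 - 2*M*m))).fun_add
      ((hasDerivAt_pow 2 r).const_mul (12*M^2*m - 24*M^2))).fun_add
      ((hasDerivAt_id' r).const_mul (48*M^3))
  have pDen := (((hasDerivAt_pow 4 r).const_mul (4*m^2)).fun_add
      ((hasDerivAt_pow 3 r).const_mul (48*M*m))).fun_add ((hasDerivAt_pow 2 r).const_mul (144*M^2))
  have hNum := ((pA1.fun_mul (dK_r r hr)).fun_add (pA2.fun_mul (dKr_r r hr))).fun_add (pA3.fun_mul (dh_r r hr))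
  have hG := hfS.fun_mul (hNum.fun_div pDen hDen0)
  have hRRa : rstar M (rstar M Phi) t r = fS M r * deriv (fun x => rstar M Phi t x) r := rfl
  have hPhival : (LamS M l r)⁻¹ * PsiZ M l hrr K t r = Phi t r := rfl
  rw [hT2, hRRa, hW.deriv_eq, hG.deriv, hPhival, hPhiT t r hr]
  rw [hKtt, hHt, hKrr t r hr, hhttrv, hhtt r hr, hLam_eq, hfs_eq r hr]
  field_simp
  ring
end
end

section
/- Source identity in the Zerilli derivation: if smooth functions h̃_tt, h̃_tr, h̃_rr, K̃ : D → ℝ satisfy the even-parity linearized vacuum Einstein equations (gauge-invariant Martel–Poisson form), then at every point of D one has the identity (3 M f λ / (2 r²)) Λ^{-1} K̃ − 2 (∂_{r*} Λ^{-1}) (∂_{r*} Ψ̃) = f (6M/r³) (λ/Λ) Λ^{-1} Ψ̃, where Ψ̃ is the Zerilli master function and ∂_{r*} Λ^{-1} denotes f · d/dr (Λ(r)^{-1}). -/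
noncomputable section

lemma slice_contDiffOn {M : ℝ} {u : ℝ → ℝ → ℝ} (h : smoothOn M u) (t : ℝ) :
    ContDiffOn ℝ (⊤ : ℕ∞) (fun s => u t s) (Set.Ioi (2*M)) := by
  have heq : (fun s => u t s) = (fun p : ℝ × ℝ => u p.1 p.2) ∘ (fun s => (t, s)) := rfl
  rw [heq]
  exact h.comp ((contDiff_const.prodMk contDiff_id).contDiffOn) (fun s hs => hs)

lemma slice_hasDerivAt {M : ℝ} {u : ℝ → ℝ → ℝ} (h : smoothOn M u) (t r : ℝ)
    (hr : 2*M < r) : HasDerivAt (fun s => u t s) (prd u t r) r := by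
  have h1 := (slice_contDiffOn h t).contDiffAt (isOpen_Ioi.mem_nhds hr)
  exact (h1.differentiableAt (by simp)).hasDerivAt

lemma slice_deriv_hasDerivAt {M : ℝ} {u : ℝ → ℝ → ℝ} (h : smoothOn M u) (t r : ℝ)
    (hr : 2*M < r) : HasDerivAt (fun s => prd u t s) (prd (prd u) t r) r := by
  have h1 := ((slice_contDiffOn h t).deriv_of_isOpen (m := (⊤ : ℕ∞)) isOpen_Ioi (by simp)).contDiffAt
    (isOpen_Ioi.mem_nhds hr)
  exact (h1.differentiableAt (by simp)).hasDerivAt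

set_option maxHeartbeats 2000000 in
/-- the source identity in the Zerilli derivation. -/
theorem zerilli_source_identity (M : ℝ) (hM : 0 < M) (l : ℕ) (hl : 2 ≤ l)
    (htt htr hrr K : ℝ → ℝ → ℝ)
    (hs_tt : smoothOn M htt) (hs_tr : smoothOn M htr)
    (hs_rr : smoothOn M hrr) (hs_K : smoothOn M K)
    (heqs : MPEven M l htt htr hrr K) :
    ∀ t r : ℝ, 2 * M < r →
      (3 * M * fS M r * lam l / (2*r^2)) * (LamS M l r)⁻¹ * K t r
        - 2 * (fS M r * deriv (fun s => (LamS M l s)⁻¹) r) * (rstar M (PsiZ M l hrr K) t r)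
        = fS M r * (6*M/r^3) * (lam l / LamS M l r) * ((LamS M l r)⁻¹ * PsiZ M l hrr K t r) := by
  intro t r hr
  -- basic positivity facts
  have hM2 : (0:ℝ) < 2*M := by linarith
  have hr0 : (0:ℝ) < r := lt_trans hM2 hr
  have hrne : r ≠ 0 := ne_of_gt hr0
  have hfpos : 0 < fS M r := by
    have h1 : 2*M/r < 1 := (div_lt_one hr0).mpr hr
    unfold fS; linarith
  have hfne : fS M r ≠ 0 := ne_of_gt hfpos
  have hmu4 : (4:ℝ) ≤ muS l := by
    have h2 : (2:ℝ) ≤ (l:ℝ) := by exact_mod_cast hl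
    unfold muS; nlinarith
  have hLpos : ∀ s : ℝ, 2*M < s → 0 < LamS M l s := by
    intro s hs
    have hs0 : (0:ℝ) < s := lt_trans hM2 hs
    have h6 : 0 < 6*M/s := by positivity
    unfold LamS; linarith
  have hLne : LamS M l r ≠ 0 := ne_of_gt (hLpos r hr)
  -- derivative of LamS and fS
  have hLam' : HasDerivAt (fun s => LamS M l s) (6*M*(-(r^2)⁻¹)) r := by
    simpa [LamS, div_eq_mul_inv] using
      (HasDerivAt.const_mul (6*M) (hasDerivAt_inv hrne)).const_add (muS l)
  have hf' : HasDerivAt (fun s => fS M s) (-(2*M*(-(r^2)⁻¹))) r := by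
    simpa [fS, div_eq_mul_inv] using
      (HasDerivAt.const_mul (2*M) (hasDerivAt_inv hrne)).const_sub 1
  have hinv : HasDerivAt (fun s => (LamS M l s)⁻¹)
      (-(6*M*(-(r^2)⁻¹)) / LamS M l r ^ 2) r := hLam'.inv hLne
  -- slice derivatives
  have hK1 : HasDerivAt (fun s => K t s) (prd K t r) r := slice_hasDerivAt hs_K t r hr
  have hK2 : HasDerivAt (fun s => prd K t s) (prd (prd K) t r) r :=
    slice_deriv_hasDerivAt hs_K t r hr
  have hH1 : HasDerivAt (fun s => hrr t s) (prd hrr t r) r := slice_hasDerivAt hs_rr t r hr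
  -- derivative of the (simplified) Zerilli function
  have hg2 := (((hLam'.mul (hasDerivAt_id r)).div_const 4).mul hK1).add
    (((hf'.mul (hasDerivAt_id r)).div_const 2).mul
      ((hf'.mul hH1).sub ((hasDerivAt_id r).mul hK2)))
  have heqfun : (fun s => PsiZ M l hrr K t s) =ᶠ[nhds r]
      (fun s => LamS M l s * s / 4 * K t s
        + fS M s * s / 2 * (fS M s * hrr t s - s * prd K t s)) := by
    filter_upwards [isOpen_Ioi.mem_nhds (by exact hr : r ∈ Set.Ioi (2*M))] with s hs
    have hLs : LamS M l s ≠ 0 := ne_of_gt (hLpos s hs)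
    simp only [PsiZ]
    field_simp
    ring
  have hPsi := hg2.congr_of_eventuallyEq heqfun
  -- Einstein equation (i)
  obtain ⟨e1, -⟩ := heqs t r hr
  have hc : prd (prd K) t r =
      -((3*r - 5*M) / (r^2 * fS M r)) * prd K t r + (fS M r / r) * prd hrr t r
        + (((lam l + 2) * r + 4*M) / (2*r^3)) * hrr t r
        + (muS l / (2*r^2 * fS M r)) * K t r := by linarith
  -- assemble
  have hmu : muS l = lam l - 2 := by unfold muS lam; ring
  have hrm : r - 2*M ≠ 0 := by intro h; rw [show r = 2*M by linarith] at hr; exact lt_irrefl _ hr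
  have hfd : fS M r = (r - 2*M) / r := by unfold fS; field_simp
  have hLd : LamS M l r = ((lam l - 2)*r + 6*M) / r := by
    rw [LamS, hmu]; field_simp
  have hQ : (lam l - 2)*r + 6*M ≠ 0 := by
    intro h0; exact hLne (by rw [hLd, h0, zero_div])
  simp only [rstar, prd]
  rw [hinv.deriv, hPsi.deriv, hc]
  simp only [PsiZ, id_eq, Pi.mul_apply, Pi.sub_apply]
  rw [hmu, hfd, hLd]
  have hrm' : r - M*2 ≠ 0 := by intro h; exact hrm (by linarith)
  have hQ' : r * (lam l - 2) + M*6 ≠ 0 := by intro h; exact hQ (by linarith)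
  field_simp
  ring
end
end

section
/- Potential term from conjugation by Λ: for every r > 2M, the function Λ(r) = μ + 6M/r satisfies Λ · (f d/dr)(f d/dr)(Λ^{-1}) = (12 M f / (Λ² r⁴)) · ( 6M²/r + 3Mμ − μ r ), where (f d/dr) is the tortoise derivative. -/
noncomputable section

/-- the potential term arising from conjugation by `Λ`. -/
theorem Lambda_conjugation_potential (M : ℝ) (hM : 0 < M) (l : ℕ) (hl : 2 ≤ l) :
    ∀ r : ℝ, 2 * M < r →
      LamS M l r * (fS M r * deriv (fun s => fS M s * deriv (fun s' => (LamS M l s')⁻¹) s) r)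
        = (12 * M * fS M r / ((LamS M l r)^2 * r^4)) * (6*M^2/r + 3*M*muS l - muS l * r) := by
  intro r hr
  have hmu : (0:ℝ) < muS l := by
    have : (2:ℝ) ≤ (l:ℝ) := by exact_mod_cast hl
    unfold muS; nlinarith
  have hrpos : 0 < r := lt_trans (by linarith) hr
  -- helper facts at any s > 2M
  have hden : ∀ s : ℝ, 2*M < s → (0:ℝ) < muS l * s + 6*M := by
    intro s hs
    have hspos : 0 < s := lt_trans (by linarith) hs
    nlinarith
  -- derivative of Λ⁻¹
  have hinv : ∀ s : ℝ, 2*M < s →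
      HasDerivAt (fun s' => (LamS M l s')⁻¹) (6*M/(muS l*s+6*M)^2) s := by
    intro s hs
    have hspos : 0 < s := lt_trans (by linarith) hs
    have hs0 : s ≠ 0 := ne_of_gt hspos
    have hL : LamS M l s ≠ 0 := by
      unfold LamS
      exact ne_of_gt (add_pos hmu (div_pos (by linarith) hspos))
    have h1 : HasDerivAt (fun s' : ℝ => LamS M l s') (-(6*M)/s^2) s := by
      have : HasDerivAt (fun s' : ℝ => muS l + 6*M/s') (6*M * (-(s^2)⁻¹)) s := by
        have := ((hasDerivAt_inv hs0).const_mul (6*M)).const_add (muS l)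
        simpa [div_eq_mul_inv] using this
      refine this.congr_deriv ?_
      ring
    have := h1.inv hL
    refine this.congr_deriv ?_
    have hL' : muS l * s + 6*M ≠ 0 := ne_of_gt (hden s hs)
    unfold LamS
    field_simp
  -- the inner function eventually equals G
  set G : ℝ → ℝ := fun s => (1 - 2*M/s) * (6*M/(muS l*s+6*M)^2) with hG
  have hev : (fun s => fS M s * deriv (fun s' => (LamS M l s')⁻¹) s) =ᶠ[nhds r] G := by
    have hopen : IsOpen {s : ℝ | 2*M < s} := isOpen_lt continuous_const continuous_id
    filter_upwards [hopen.mem_nhds hr] with s hs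
    simp only [fS, hG]
    rw [(hinv s hs).deriv]
  -- derivative of G at r
  have hr0 : r ≠ 0 := ne_of_gt hrpos
  have hd : muS l * r + 6*M ≠ 0 := ne_of_gt (hden r hr)
  have hG1 : HasDerivAt (fun s : ℝ => 1 - 2*M/s) (2*M/r^2) r := by
    have : HasDerivAt (fun s : ℝ => 1 - 2*M/s) (-(2*M * (-(r^2)⁻¹))) r := by
      have := ((hasDerivAt_inv hr0).const_mul (2*M)).const_sub 1
      simpa [div_eq_mul_inv] using this
    convert this using 1; field_simp
  have hG2 : HasDerivAt (fun s : ℝ => 6*M/(muS l*s+6*M)^2)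
      ((0 * (muS l*r+6*M)^2 - 6*M * (2*(muS l*r+6*M)*muS l)) / ((muS l*r+6*M)^2)^2) r := by
    have hq : HasDerivAt (fun s : ℝ => (muS l*s+6*M)^2) (2*(muS l*r+6*M)*muS l) r := by
      have h0 : HasDerivAt (fun s : ℝ => muS l*s+6*M) (muS l) r := by
        simpa using ((hasDerivAt_id r).const_mul (muS l)).add_const (6*M)
      have := h0.pow 2
      refine this.congr_deriv ?_; norm_num
    exact (hasDerivAt_const r (6*M)).div hq (pow_ne_zero 2 hd)
  have hGder : HasDerivAt G
      ((2*M/r^2) * (6*M/(muS l*r+6*M)^2)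
        + (1 - 2*M/r) * ((0 * (muS l*r+6*M)^2 - 6*M * (2*(muS l*r+6*M)*muS l)) / ((muS l*r+6*M)^2)^2)) r :=
    hG1.mul hG2
  rw [hev.deriv_eq, hGder.deriv]
  unfold LamS fS
  have hL' : muS l + 6*M/r ≠ 0 :=
    ne_of_gt (add_pos hmu (div_pos (by linarith) hrpos))
  field_simp
  ring
end
end

section
/- Gauge invariance of the Martel–Poisson variable h̃_tt: for all smooth functions ξ_t, ξ_r, ξ : D → ℝ, if the even-parity perturbation fields are pure gauge, i.e. h_tt = −2∂_t ξ_t + (2Mf/r²) ξ_r, j_t = −∂_t ξ − ξ_t, j_r = −∂_r ξ − ξ_r + (2/r) ξ, and G = −(2/r²) ξ, then the combination h̃_tt := h_tt − 2∂_t j_t + (2Mf/r²) j_r + r² ∂_t² G − M f ∂_r G vanishes identically on D. -/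
noncomputable section

open Topology

lemma memNhds (M t r : ℝ) (hr : 2 * M < r) : {p : ℝ × ℝ | 2 * M < p.2} ∈ 𝓝 (t, r) :=
  (isOpen_lt continuous_const continuous_snd).mem_nhds hr

lemma cda {M : ℝ} {u : ℝ → ℝ → ℝ} (hu : smoothOn M u) (t r : ℝ) (hr : 2 * M < r) :
    ContDiffAt ℝ (⊤ : ℕ∞) (fun p : ℝ × ℝ => u p.1 p.2) (t, r) :=
  hu.contDiffAt (memNhds M t r hr)

lemma diff_t {M : ℝ} {u : ℝ → ℝ → ℝ} (hu : smoothOn M u) (t r : ℝ) (hr : 2 * M < r) :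
    DifferentiableAt ℝ (fun s => u s r) t :=
  ((cda hu t r hr).differentiableAt (by simp)).comp (f := fun s => (s, r)) t
    (differentiableAt_id.prodMk (differentiableAt_const r))

lemma diff_r {M : ℝ} {u : ℝ → ℝ → ℝ} (hu : smoothOn M u) (t r : ℝ) (hr : 2 * M < r) :
    DifferentiableAt ℝ (fun s => u t s) r :=
  ((cda hu t r hr).differentiableAt (by simp)).comp r
    ((differentiableAt_const t).prodMk differentiableAt_id)

lemma ptd_eq_fderiv {M : ℝ} {u : ℝ → ℝ → ℝ} (hu : smoothOn M u) (t r : ℝ) (hr : 2 * M < r) :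
    ptd u t r = fderiv ℝ (fun p : ℝ × ℝ => u p.1 p.2) (t, r) (1, 0) := by
  have hF := (cda hu t r hr).differentiableAt (by simp)
  have hline : HasDerivAt (fun s : ℝ => ((s, r) : ℝ × ℝ)) ((1 : ℝ), (0 : ℝ)) t :=
    (hasDerivAt_id t).prodMk (hasDerivAt_const t r)
  exact (hF.hasFDerivAt.comp_hasDerivAt t hline).deriv

lemma diff_ptd {M : ℝ} {u : ℝ → ℝ → ℝ} (hu : smoothOn M u) (t r : ℝ) (hr : 2 * M < r) :
    DifferentiableAt ℝ (fun s => ptd u s r) t := by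
  have e : (fun s => ptd u s r) =
      fun s => fderiv ℝ (fun p : ℝ × ℝ => u p.1 p.2) (s, r) ((1 : ℝ), (0 : ℝ)) :=
    funext fun s => ptd_eq_fderiv hu s r hr
  rw [e]
  have h1 : ContDiffAt ℝ (⊤ : ℕ∞) (fderiv ℝ (fun p : ℝ × ℝ => u p.1 p.2)) (t, r) :=
    (cda hu t r hr).fderiv_right (by simp)
  have h2 : DifferentiableAt ℝ (fun s : ℝ => fderiv ℝ (fun p : ℝ × ℝ => u p.1 p.2) (s, r)) t :=
    (h1.differentiableAt (by simp)).comp t (differentiableAt_id.prodMk (differentiableAt_const r))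
  exact h2.clm_apply (differentiableAt_const _)


/-- gauge invariance of the Martel–Poisson variable `h̃_tt`. -/
theorem gauge_invariance_htt (M : ℝ) (hM : 0 < M) (l : ℕ) (hl : 2 ≤ l)
    (xit xir xi : ℝ → ℝ → ℝ)
    (hs_t : smoothOn M xit) (hs_r : smoothOn M xir) (hs : smoothOn M xi)
    (htt jt jr G : ℝ → ℝ → ℝ)
    (h_htt : ∀ t r : ℝ, 2 * M < r →
      htt t r = -2 * ptd xit t r + (2*M*fS M r/r^2) * xir t r)
    (h_jt : ∀ t r : ℝ, 2 * M < r → jt t r = -(ptd xi t r) - xit t r)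
    (h_jr : ∀ t r : ℝ, 2 * M < r → jr t r = -(prd xi t r) - xir t r + (2/r) * xi t r)
    (h_G : ∀ t r : ℝ, 2 * M < r → G t r = -(2/r^2) * xi t r) :
    ∀ t r : ℝ, 2 * M < r →
      htt t r - 2 * ptd jt t r + (2*M*fS M r/r^2) * jr t r
        + r^2 * ptd (ptd G) t r - M * fS M r * prd G t r = 0 := by
  intro t r hr
  have hrpos : (0 : ℝ) < r := by linarith
  have hr0 : r ≠ 0 := hrpos.ne'
  have hA : ptd jt t r = -(deriv (fun s => ptd xi s r) t) - ptd xit t r := by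
    have e : (fun s => jt s r) = fun s => -(ptd xi s r) - xit s r :=
      funext fun s => h_jt s r hr
    show deriv (fun s => jt s r) t = _
    rw [e, deriv_fun_sub ((diff_ptd hs t r hr).fun_neg) (diff_t hs_t t r hr), deriv.fun_neg]; rfl
  have hB : ptd (ptd G) t r = -(2/r^2) * deriv (fun s => ptd xi s r) t := by
    have e1 : (fun s => ptd G s r) = fun s => -(2/r^2) * ptd xi s r := by
      funext s
      show deriv (fun a => G a r) s = _
      have e2 : (fun a => G a r) = fun a => -(2/r^2) * xi a r := funext fun a => h_G a r hr
      rw [e2, deriv_const_mul_field]; rfl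
    show deriv (fun s => ptd G s r) t = _
    rw [e1, deriv_const_mul_field]
  have hC : prd G t r = 4/r^3 * xi t r + -(2/r^2) * prd xi t r := by
    have hev : (fun s => G t s) =ᶠ[𝓝 r] fun s => -(2/s^2) * xi t s := by
      filter_upwards [(isOpen_lt continuous_const continuous_id).mem_nhds hr] with s hs'
      exact h_G t s hs'
    have hd1 : HasDerivAt (fun s : ℝ => -(2/s^2)) (4/r^3) r := by
      have h : HasDerivAt (fun s : ℝ => -(2/s^2)) _ r := ((hasDerivAt_const r (2:ℝ)).div (hasDerivAt_pow 2 r) (pow_ne_zero 2 hr0)).neg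
      convert h using 1
      norm_num
      field_simp
      ring
    have hd2 : HasDerivAt (fun s => xi t s) (prd xi t r) r := (diff_r hs t r hr).hasDerivAt
    have hmul := hd1.mul hd2
    show deriv (fun s => G t s) r = _
    rw [hev.deriv_eq]
    exact hmul.deriv
  rw [h_htt t r hr, h_jr t r hr, hA, hB, hC]
  simp only [fS]
  field_simp
  ring
end
end

section
/- Gauge invariance of the combined spin-weight-zero variable: let Ψ, K, G : D → ℝ be smooth functions and let ξ_t, ξ_r, ξ : D → ℝ be smooth gauge functions. Suppose the gauge-transformed fields are Ψ' = Ψ − (3M/r⁴) ξ^r with ξ^r = −f ξ_r, K' = K − (2f/r) ξ_r + (λ/r²) ξ, and G' = G − (2/r²) ξ. Then at every point of D one has r³ Ψ' + (3M/2)( K' + (λ/2) G' ) = r³ Ψ + (3M/2)( K + (λ/2) G ); that is, the combination Ψ̃ := r³ Ψ + (3M/2)(K + (λ/2)G) is invariant under even-parity coordinate gauge transformations. -/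
noncomputable section

/-- gauge invariance of the combined spin-weight-zero variable
`Ψ̃ = r³ Ψ + (3M/2)(K + (λ/2) G)`. -/
theorem gauge_invariance_combined (M : ℝ) (hM : 0 < M) (l : ℕ) (hl : 2 ≤ l)
    (Psi K G Psi' K' G' : ℝ → ℝ → ℝ)
    (xit xir xi : ℝ → ℝ → ℝ)
    (hsPsi : smoothOn M Psi) (hsK : smoothOn M K) (hsG : smoothOn M G)
    (hs_t : smoothOn M xit) (hs_r : smoothOn M xir) (hs : smoothOn M xi)
    (hPsi' : ∀ t r : ℝ, 2 * M < r →
      Psi' t r = Psi t r - (3*M/r^4) * (-(fS M r) * xir t r))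
    (hK' : ∀ t r : ℝ, 2 * M < r →
      K' t r = K t r - (2 * fS M r / r) * xir t r + (lam l / r^2) * xi t r)
    (hG' : ∀ t r : ℝ, 2 * M < r → G' t r = G t r - (2/r^2) * xi t r) :
    ∀ t r : ℝ, 2 * M < r →
      r^3 * Psi' t r + (3*M/2) * (K' t r + (lam l/2) * G' t r)
        = r^3 * Psi t r + (3*M/2) * (K t r + (lam l/2) * G t r) := by
  intro t r hr
  have hr0 : r ≠ 0 := by nlinarith
  rw [hPsi' t r hr, hK' t r hr, hG' t r hr]
  simp only [fS]
  field_simp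
  ring
end
end
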